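/- arXiv:0806.0978 — 3 statements merged into one kernel-verified Lean document; each statement's English description precedes it below -/
import Mathlib

section
/- For each i = 1,…,n define the k-derivation D_i := −Σ_{r=1}^n φ^r_i·δ_r of A. Then ⁅D_i, D_j⁆ = Σ_{s=1}^n C^s_{ij}·D_s for all i, j; consequently the k-linear map 𝔤 → Der_k(A) sending the basis element x̂_i to D_i is a homomorphism of Lie algebras. -/
/-!
For pairwise commuting derivations `δ r`, the bracket of two "vector fields" is computed
coefficientwise: for `X = ∑ a r • δ r` and `Y = ∑ b r • δ r`,
`⁅X, Y⁆ = ∑ (X (b r) - Y (a r)) • δ r`. For `D i = ∑ (-φ r i) • δ r`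
the coefficients of `⁅D i, D j⁆` are, up to sign, the left-hand side of the structure equation,
hence those of `∑ C s i j • D s`. A linear map defined on a basis is a Lie homomorphism as soon
as it respects brackets of basis vectors, both sides being bilinear.
-/

namespace Derivation

variable {R A : Type*} [CommRing R] [CommRing A] [Algebra R A]

theorem lie_smul_smul (a b : A) (D₁ D₂ : Derivation R A A) :
    ⁅a • D₁, b • D₂⁆ = (a * D₁ b) • D₂ - (b * D₂ a) • D₁ + (a * b) • ⁅D₁, D₂⁆ := by
  ext x
  simp only [commutator_apply, smul_apply, add_apply, sub_apply, leibniz, smul_eq_mul]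
  ring

theorem sum_apply {ι : Type*} (s : Finset ι) (D : ι → Derivation R A A) (x : A) :
    (∑ i ∈ s, D i) x = ∑ i ∈ s, D i x :=
  (congrFun (map_sum (coeFnAddMonoidHom : Derivation R A A →+ A → A) D s) x).trans
    (Finset.sum_apply x s _)

variable {ι : Type*} [Fintype ι] {δ : ι → Derivation R A A}

theorem lie_sum_smul_of_commute (hδ : ∀ r s, ⁅δ r, δ s⁆ = 0) (a b : ι → A) :
    ⁅∑ r, a r • δ r, ∑ r, b r • δ r⁆ =
      ∑ r, ((∑ l, a l • δ l) (b r) - (∑ l, b l • δ l) (a r)) • δ r := by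
  simp only [sum_lie, lie_sum, lie_smul_smul, hδ, smul_zero, add_zero, sub_smul,
    Finset.sum_sub_distrib, sum_apply, smul_apply, smul_eq_mul, Finset.sum_smul]
  rw [Finset.sum_comm (f := fun r l => (b r * δ r (a l)) • δ l)]

end Derivation

namespace Module.Basis

variable {ι R L M : Type*} [CommRing R] [LieRing L] [LieAlgebra R L] [LieRing M] [LieAlgebra R M]

noncomputable def constrLie (b : Basis ι R L) (v : ι → M)
    (hv : ∀ i j, b.constr R v ⁅b i, b j⁆ = ⁅v i, v j⁆) : L →ₗ⁅R⁆ M where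
  toLinearMap := b.constr R v
  map_lie' {x y} := by
    have hbilin : (LieModule.toEnd R L L : L →ₗ[R] Module.End R L).compr₂ (b.constr R v) =
        (LieModule.toEnd R M M : M →ₗ[R] Module.End R M).compl₁₂ (b.constr R v) (b.constr R v) :=
      LinearMap.ext_basis b b fun i j => by simpa using hv i j
    exact LinearMap.congr_fun₂ hbilin x y

end Module.Basis

theorem twisted_derivations_lie_hom_general
    (k : Type*) [Field k] (n : ℕ)
    (𝔤 : Type*) [LieRing 𝔤] [LieAlgebra k 𝔤]
    (b : Module.Basis (Fin n) k 𝔤)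
    (C : Fin n → Fin n → Fin n → k)
    (hC : ∀ i j, ⁅b i, b j⁆ = ∑ s, C s i j • b s)
    (A : Type*) [CommRing A] [Algebra k A]
    (δ : Fin n → Derivation k A A)
    (hδ : ∀ r s, ⁅δ r, δ s⁆ = 0)
    (φ : Fin n → Fin n → A)
    (hφ : ∀ i j m, ∑ l, (φ l j * δ l (φ m i) - φ l i * δ l (φ m j))
        = ∑ s, C s i j • φ m s)
    (D : Fin n → Derivation k A A)
    (hD : ∀ i, D i = -∑ r, φ r i • δ r) :
    (∀ i j, ⁅D i, D j⁆ = ∑ s, C s i j • D s) ∧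
      ∃ f : 𝔤 →ₗ⁅k⁆ Derivation k A A, ∀ i, f (b i) = D i := by
  have hD' : ∀ i, D i = ∑ r, (-φ r i) • δ r := fun i => by
    simp only [hD, neg_smul, Finset.sum_neg_distrib]
  have bracket : ∀ i j, ⁅D i, D j⁆ = ∑ s, C s i j • D s := by
    intro i j
    have coeff : ∀ r, D i (-φ r j) - D j (-φ r i) = -∑ s, C s i j • φ r s := fun r => by
      simp only [← hφ i j r, hD, Derivation.neg_apply, Derivation.sum_apply,
        Derivation.smul_apply, map_neg, neg_neg, smul_eq_mul, Finset.sum_sub_distrib]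
      ring
    calc ⁅D i, D j⁆ = ∑ r, (D i (-φ r j) - D j (-φ r i)) • δ r := by
          rw [hD' i, hD' j, Derivation.lie_sum_smul_of_commute hδ, ← hD' i, ← hD' j]
      _ = ∑ r, (-∑ s, C s i j • φ r s) • δ r := by simp only [coeff]
      _ = ∑ s, C s i j • D s := by
          simp only [hD', Finset.smul_sum, smul_assoc, neg_smul, Finset.sum_neg_distrib,
            Finset.sum_smul, smul_neg]
          rw [Finset.sum_comm]
  refine ⟨bracket, b.constrLie D fun i j => ?_, b.constr_basis k D⟩
  rw [hC, map_sum, bracket]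
  simp only [map_smul, b.constr_basis]

/-- The derivations `D i = -∑ r, φ r i • δ r` satisfy
`⁅D i, D j⁆ = ∑ s, C s i j • D s`, hence `x̂ i ↦ D i` extends to a Lie algebra
homomorphism `𝔤 → Der_k(A)`. -/
theorem twisted_derivations_lie_hom
    (k : Type*) [Field k] [CharZero k] (n : ℕ) (hn : 0 < n)
    (𝔤 : Type*) [LieRing 𝔤] [LieAlgebra k 𝔤]
    (b : Module.Basis (Fin n) k 𝔤)
    (C : Fin n → Fin n → Fin n → k)
    (hC : ∀ i j, ⁅b i, b j⁆ = ∑ s, C s i j • b s)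
    (A : Type*) [CommRing A] [Algebra k A]
    (δ : Fin n → Derivation k A A)
    (hδ : ∀ r s, ⁅δ r, δ s⁆ = 0)
    (φ : Fin n → Fin n → A)
    (hφ : ∀ i j m, ∑ l, (φ l j * δ l (φ m i) - φ l i * δ l (φ m j))
        = ∑ s, C s i j • φ m s)
    (D : Fin n → Derivation k A A)
    (hD : ∀ i, D i = -∑ r, φ r i • δ r) :
    (∀ i j, ⁅D i, D j⁆ = ∑ s, C s i j • D s) ∧
      ∃ f : 𝔤 →ₗ⁅k⁆ Derivation k A A, ∀ i, f (b i) = D i :=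
  twisted_derivations_lie_hom_general k n 𝔤 b C hC A δ hδ φ hφ D hD
end

section
/- Define X_i := Σ_{a=1}^n x_a·ι(φ^a_i) ∈ B for i = 1,…,n. Then X_i·X_j − X_j·X_i = Σ_{k=1}^n C^k_{ij}·X_k for all i, j; consequently the linear map 𝔤 → B sending x̂_i to X_i is a Lie algebra homomorphism into B equipped with the commutator bracket. -/
open scoped BigOperators

attribute [local instance] LieRing.ofAssociativeRing

/-!
Write `X(u) := ∑ₐ xₐ · ι(uₐ)` for a column `u` with entries in `A`. Moving `ι(uₐ)` past `x_c`
with the Weyl relation `ι(a) x_c = x_c ι(a) + ι(δ_c a)` shows that `X(u) X(v)` is a part symmetric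
in `u, v` (the `x` commute, `A` is commutative) plus `X(w)` with `w_m = ∑_c v_c δ_c(u_m)`.
Hence `[X(u), X(v)] = X([u, v])` for the vector-field bracket of the columns, and the structure
equation says that the bracket of the columns `φ^·_i, φ^·_j` of `φ` is `∑ₛ C^s_{ij} φ^·_s`.
A linear map that matches structure constants on a basis is a Lie algebra homomorphism,
because both sides of `f ⁅u, v⁆ = ⁅f u, f v⁆` are bilinear.
-/

section Realization

variable {ι A B : Type*} [Fintype ι] [CommRing A] [Ring B]

def realization (x : ι → B) (f : A →+* B) (u : ι → A) : B := ∑ a, x a * f (u a)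

/-- The components of the vector-field bracket `⁅∑ vₐ δₐ, ∑ uₐ δₐ⁆` (note the order). -/
def fieldBracket (δ : ι → A → A) (u v : ι → A) : ι → A :=
  fun m => ∑ l, (v l * δ l (u m) - u l * δ l (v m))

theorem realization_sub (x : ι → B) (f : A →+* B) (u v : ι → A) :
    realization x f (u - v) = realization x f u - realization x f v := by
  simp only [realization, Pi.sub_apply, map_sub, mul_sub, Finset.sum_sub_distrib]

theorem realization_mul (x : ι → B) (f : A →+* B) (δ : ι → A → A)
    (hrel : ∀ a j, f a * x j - x j * f a = f (δ j a)) (u v : ι → A) :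
    realization x f u * realization x f v =
      (∑ a, ∑ c, x a * x c * f (u a * v c)) +
        realization x f (fun a => ∑ c, v c * δ c (u a)) := by
  have hmove : ∀ a c, f a * x c = x c * f a + f (δ c a) := fun a c => by
    rw [← hrel, add_sub_cancel]
  have hterm : ∀ a c, x a * f (u a) * (x c * f (v c)) =
      x a * x c * f (u a * v c) + x a * f (v c * δ c (u a)) := fun a c => by
    calc x a * f (u a) * (x c * f (v c)) = x a * (f (u a) * x c) * f (v c) := by noncomm_ring
      _ = x a * x c * (f (u a) * f (v c)) + x a * (f (δ c (u a)) * f (v c)) := by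
        rw [hmove]; noncomm_ring
      _ = _ := by rw [← map_mul, ← map_mul, mul_comm (δ c (u a))]
  rw [realization, realization, Finset.sum_mul_sum]
  simp only [hterm, Finset.sum_add_distrib, realization, map_sum, Finset.mul_sum]

theorem realization_commutator (x : ι → B) (hxx : ∀ i j, x i * x j = x j * x i)
    (f : A →+* B) (δ : ι → A → A) (hrel : ∀ a j, f a * x j - x j * f a = f (δ j a))
    (u v : ι → A) :
    realization x f u * realization x f v - realization x f v * realization x f u =
      realization x f (fieldBracket δ u v) := by
  have hsymm : ∑ a, ∑ c, x a * x c * f (u a * v c) = ∑ a, ∑ c, x a * x c * f (v a * u c) := by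
    rw [Finset.sum_comm]
    exact Finset.sum_congr rfl fun a _ => Finset.sum_congr rfl fun c _ => by
      rw [hxx, mul_comm]
  have hbracket : fieldBracket δ u v =
      (fun a => ∑ c, v c * δ c (u a)) - fun a => ∑ c, u c * δ c (v a) := by
    ext m
    simp only [fieldBracket, Pi.sub_apply, Finset.sum_sub_distrib]
  rw [realization_mul x f δ hrel, realization_mul x f δ hrel, hsymm, add_sub_add_left_eq_sub,
    hbracket, realization_sub]

theorem realization_sum_smul {k : Type*} [CommSemiring k] [Algebra k A] [Algebra k B]
    (x : ι → B) (f : A →ₐ[k] B) (c : ι → k) (u : ι → ι → A) :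
    realization x (f : A →+* B) (∑ s, c s • u s) =
      ∑ s, c s • realization x (f : A →+* B) (u s) := by
  simp only [realization, Finset.sum_apply, Pi.smul_apply, map_sum, AlgHom.coe_toRingHom,
    map_smul, Finset.mul_sum, mul_smul_comm, Finset.smul_sum]
  exact Finset.sum_comm

end Realization

theorem Module.Basis.exists_lieHom_of_structureConstants {R L M ι : Type*} [CommRing R]
    [LieRing L] [LieAlgebra R L] [LieRing M] [LieAlgebra R M] [Fintype ι]
    (b : Module.Basis ι R L) (C : ι → ι → ι → R) (hC : ∀ i j, ⁅b i, b j⁆ = ∑ s, C s i j • b s)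
    (X : ι → M) (hX : ∀ i j, ⁅X i, X j⁆ = ∑ s, C s i j • X s) :
    ∃ f : L →ₗ⁅R⁆ M, ∀ i, f (b i) = X i := by
  set f := b.constr R X
  have hfb : ∀ i, f (b i) = X i := b.constr_basis R X
  have hbilin : (LieModule.toEnd R L L : L →ₗ[R] L →ₗ[R] L).compr₂ f =
      (LieModule.toEnd R M M : M →ₗ[R] M →ₗ[R] M).compl₁₂ f f :=
    LinearMap.ext_basis b b fun i j => by
      simp [hC, hX, hfb]
  refine ⟨{ toLinearMap := f, map_lie' := fun {u v} => ?_ }, hfb⟩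
  simpa using LinearMap.congr_fun₂ hbilin u v

theorem phi_realization_lie_hom_general
    (k : Type*) [Field k] (n : ℕ)
    (𝔤 : Type*) [LieRing 𝔤] [LieAlgebra k 𝔤]
    (b : Module.Basis (Fin n) k 𝔤)
    (C : Fin n → Fin n → Fin n → k)
    (hC : ∀ i j, ⁅b i, b j⁆ = ∑ s, C s i j • b s)
    (A : Type*) [CommRing A] [Algebra k A]
    (δ : Fin n → Derivation k A A)
    (φ : Fin n → Fin n → A)
    (hφ : ∀ i j m, ∑ l, (φ l j * δ l (φ m i) - φ l i * δ l (φ m j))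
        = ∑ s, C s i j • φ m s)
    (B : Type*) [Ring B] [Algebra k B]
    (ι : A →ₐ[k] B)
    (x : Fin n → B)
    (hxx : ∀ i j, x i * x j = x j * x i)
    (hrel : ∀ (a : A) (j : Fin n), ι a * x j - x j * ι a = ι (δ j a))
    (X : Fin n → B)
    (hX : ∀ i, X i = ∑ a, x a * ι (φ a i)) :
    (∀ i j, X i * X j - X j * X i = ∑ s, C s i j • X s) ∧
      ∃ f : 𝔤 →ₗ⁅k⁆ B, ∀ i, f (b i) = X i := by
  have hX' : ∀ i, X i = realization x ι (φ · i) := hX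
  have hcommutator : ∀ i j, X i * X j - X j * X i = ∑ s, C s i j • X s := fun i j => by
    have hcolumns : fieldBracket (fun l => ⇑(δ l)) (φ · i) (φ · j) =
        ∑ s, C s i j • (φ · s) := by
      ext m
      simp only [fieldBracket, hφ, Finset.sum_apply, Pi.smul_apply]
    simp only [hX', realization_commutator x hxx ι (fun l => ⇑(δ l)) hrel, hcolumns,
      realization_sum_smul]
  exact ⟨hcommutator, b.exists_lieHom_of_structureConstants C hC X fun i j => by
    rw [Ring.lie_def, hcommutator]⟩

/-- in the (semicompleted) Weyl-algebra-type realization `B`,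
the elements `X i = ∑ a, x a * ι (φ a i)` satisfy
`X i * X j - X j * X i = ∑ s, C s i j • X s`; consequently `x̂ i ↦ X i` is a
Lie algebra homomorphism of `𝔤` into `B` with the commutator bracket. -/
theorem phi_realization_lie_hom
    (k : Type*) [Field k] [CharZero k] (n : ℕ) (hn : 0 < n)
    (𝔤 : Type*) [LieRing 𝔤] [LieAlgebra k 𝔤]
    (b : Module.Basis (Fin n) k 𝔤)
    (C : Fin n → Fin n → Fin n → k)
    (hC : ∀ i j, ⁅b i, b j⁆ = ∑ s, C s i j • b s)
    (A : Type*) [CommRing A] [Algebra k A]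
    (δ : Fin n → Derivation k A A)
    (hδ : ∀ r s, ⁅δ r, δ s⁆ = 0)
    (φ : Fin n → Fin n → A)
    (hφ : ∀ i j m, ∑ l, (φ l j * δ l (φ m i) - φ l i * δ l (φ m j))
        = ∑ s, C s i j • φ m s)
    (B : Type*) [Ring B] [Algebra k B]
    (ι : A →ₐ[k] B)
    (x : Fin n → B)
    (hxx : ∀ i j, x i * x j = x j * x i)
    (hrel : ∀ (a : A) (j : Fin n), ι a * x j - x j * ι a = ι (δ j a))
    (X : Fin n → B)
    (hX : ∀ i, X i = ∑ a, x a * ι (φ a i)) :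
    (∀ i j, X i * X j - X j * X i = ∑ s, C s i j • X s) ∧
      ∃ f : 𝔤 →ₗ⁅k⁆ B, ∀ i, f (b i) = X i :=
  phi_realization_lie_hom_general k n 𝔤 b C hC A δ φ hφ B ι x hxx hrel X hX
end

section
/- Suppose p^1,…,p^n ∈ A satisfy δ_a(p^j) = δ^j_a·1_A (Kronecker delta) for all a, j. Then for all i, j one has ι(p^j)·X_i − X_i·ι(p^j) = ι(φ^j_i) in B; that is, the deformed Heisenberg relation [∂^j, x̂_i] = φ^j_i holds in the realization. -/
theorem mul_mul_sub_mul_mul_of_commute {R : Type*} [Ring R] {a c : R} (x : R)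
    (h : Commute a c) : a * (x * c) - x * c * a = (a * x - x * a) * c := by
  rw [mul_assoc x, ← h.eq]
  noncomm_ring

theorem map_mul_sum_sub_sum_mul_map {σ A B F : Type*} [Fintype σ] [CommRing A] [Ring B]
    [FunLike F A B] [RingHomClass F A B] (ι : F) (x : σ → B) (q : A) (f d : σ → A)
    (hd : ∀ a, ι q * x a - x a * ι q = ι (d a)) :
    ι q * ∑ a, x a * ι (f a) - (∑ a, x a * ι (f a)) * ι q = ι (∑ a, d a * f a) := by
  have hcomm : ∀ a, Commute (ι q) (ι (f a)) := fun a => (Commute.all q (f a)).map ι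
  simp only [Finset.mul_sum, Finset.sum_mul, ← Finset.sum_sub_distrib, map_sum, map_mul,
    mul_mul_sub_mul_mul_of_commute _ (hcomm _), hd]

theorem deformed_heisenberg_relation_general
    (k : Type*) [Field k] (n : ℕ)
    (A : Type*) [CommRing A] [Algebra k A]
    (δ : Fin n → Derivation k A A)
    (φ : Fin n → Fin n → A)
    (B : Type*) [Ring B] [Algebra k B]
    (ι : A →ₐ[k] B)
    (x : Fin n → B)
    (hrel : ∀ (a : A) (j : Fin n), ι a * x j - x j * ι a = ι (δ j a))
    (X : Fin n → B)
    (hX : ∀ i, X i = ∑ a, x a * ι (φ a i))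
    (p : Fin n → A)
    (hp : ∀ a j, δ a (p j) = if a = j then (1 : A) else 0) :
    ∀ i j, ι (p j) * X i - X i * ι (p j) = ι (φ j i) := by
  intro i j
  rw [hX, map_mul_sum_sub_sum_mul_map ι x (p j) (φ · i) (δ · (p j)) (hrel (p j))]
  simp [hp]

/-- if `p^1, …, p^n ∈ A` satisfy `δ_a(p^j) = δ^j_a` (Kronecker
delta), then the deformed Heisenberg relation
`ι(p^j) * X i - X i * ι(p^j) = ι(φ^j_i)` holds in the realization `B`,
i.e. `[∂^j, x̂_i] = φ^j_i`. -/
theorem deformed_heisenberg_relation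
    (k : Type*) [Field k] [CharZero k] (n : ℕ) (hn : 0 < n)
    (𝔤 : Type*) [LieRing 𝔤] [LieAlgebra k 𝔤]
    (b : Module.Basis (Fin n) k 𝔤)
    (C : Fin n → Fin n → Fin n → k)
    (hC : ∀ i j, ⁅b i, b j⁆ = ∑ s, C s i j • b s)
    (A : Type*) [CommRing A] [Algebra k A]
    (δ : Fin n → Derivation k A A)
    (hδ : ∀ r s, ⁅δ r, δ s⁆ = 0)
    (φ : Fin n → Fin n → A)
    (hφ : ∀ i j m, ∑ l, (φ l j * δ l (φ m i) - φ l i * δ l (φ m j))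
        = ∑ s, C s i j • φ m s)
    (B : Type*) [Ring B] [Algebra k B]
    (ι : A →ₐ[k] B)
    (x : Fin n → B)
    (hxx : ∀ i j, x i * x j = x j * x i)
    (hrel : ∀ (a : A) (j : Fin n), ι a * x j - x j * ι a = ι (δ j a))
    (X : Fin n → B)
    (hX : ∀ i, X i = ∑ a, x a * ι (φ a i))
    (p : Fin n → A)
    (hp : ∀ a j, δ a (p j) = if a = j then (1 : A) else 0) :
    ∀ i j, ι (p j) * X i - X i * ι (p j) = ι (φ j i) :=
  deformed_heisenberg_relation_general k n A δ φ B ι x hrel X hX p hp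
end
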